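/- arXiv:1705.05243 — 6 statements merged into one kernel-verified Lean document; each statement's English description precedes it below -/
import Mathlib

section
/- Let e and f be μ-important edges of C, and let g be an edge of C such that both endpoints of e lie in one connected component of C − g and both endpoints of f lie in the other connected component of C − g. Then g is μ-important. (Consequently, the μ-important edges of C, together with their endpoints, form a subtree of C.) -/
/-- The set of labels carried by a set `S` of vertices. -/
def labelSet {V M : Type*} (L : V → Set M) (S : Set V) : Set M :=
  ⋃ v ∈ S, L v

/-- The connected component of `u` in the graph `C` with the edge `s(u, v)` deleted.
For a tree `C` and an edge `uv`, `edgeSide C u v` and `edgeSide C v u` are the two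
connected components of `C − uv`. -/
def edgeSide {V : Type*} (C : SimpleGraph V) (u v : V) : Set V :=
  {w | (C.deleteEdges {s(u, v)}).Reachable u w}

/-- The edge `uv` of `C` is `μ`-important: for each of the two components `K` of `C − uv`,
the label set of `K` properly contains `{μ}`. -/
def ImportantEdge {V M : Type*} (C : SimpleGraph V) (L : V → Set M) (μ : M) (u v : V) :
    Prop :=
  C.Adj u v ∧
    (μ ∈ labelSet L (edgeSide C u v) ∧ labelSet L (edgeSide C u v) ≠ {μ}) ∧
    (μ ∈ labelSet L (edgeSide C v u) ∧ labelSet L (edgeSide C v u) ≠ {μ})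

/-- The graph `C` with the vertex `v` deleted (all edges incident to `v` removed). -/
def delVertex {V : Type*} (C : SimpleGraph V) (v : V) : SimpleGraph V :=
  C.deleteEdges {e : Sym2 V | v ∈ e}

/-- The connected component of `w` in `C − v`. -/
def vertComp {V : Type*} (C : SimpleGraph V) (v w : V) : Set V :=
  {x | (delVertex C v).Reachable w x}

/-- The vertex `v` of `C` is `μ`-important: every connected component `T` of `C − v`
has label set equal to `{μ}` or not containing `μ` at all. -/
def ImportantVertex {V M : Type*} (C : SimpleGraph V) (L : V → Set M) (μ : M) (v : V) :
    Prop :=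
  ∀ w : V, w ≠ v →
    labelSet L (vertComp C v w) = {μ} ∨ μ ∉ labelSet L (vertComp C v w)

/-!
Since every tree edge is a bridge, `g₂` misses one of the two sides of `e`; a walk inside that
side never uses `g`, so when both endpoints of `e` lie on the `g₁`-side of `g`, that whole side of
`e` does too. Its label set already properly contains `{μ}`, hence so does the label set of the
`g₁`-side of `g`; symmetrically for `f` and the `g₂`-side.
-/

namespace SimpleGraph

variable {V : Type*} {C : SimpleGraph V}

lemma edgeSide_swap (u v : V) :
    edgeSide C v u = {w | (C.deleteEdges {s(u, v)}).Reachable v w} := by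
  rw [edgeSide, Sym2.eq_swap]

lemma IsAcyclic.notMem_edgeSide_or (hC : C.IsAcyclic) {u v : V} (huv : C.Adj u v) (x : V) :
    x ∉ edgeSide C u v ∨ x ∉ edgeSide C v u := by
  rw [edgeSide_swap u v, or_iff_not_and_not, not_not, not_not]
  rintro ⟨hux, hvx⟩
  exact isBridge_iff.mp (isAcyclic_iff_forall_adj_isBridge.mp hC huv) (hux.trans hvx.symm)

lemma edgeSide_subset_edgeSide {u v g₁ g₂ : V} (hu : u ∈ edgeSide C g₁ g₂)
    (hg₂ : g₂ ∉ edgeSide C u v) : edgeSide C u v ⊆ edgeSide C g₁ g₂ := by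
  classical
  rintro w ⟨p⟩
  have hg : s(g₁, g₂) ∉ p.edges := fun hmem =>
    hg₂ ⟨p.takeUntil g₂ (p.snd_mem_support_of_mem_edges hmem)⟩
  have hp : ∀ e ∈ p.edges, e ∈ (C.deleteEdges {s(g₁, g₂)}).edgeSet := fun e he => by
    have hne : e ≠ s(g₁, g₂) := by rintro rfl; exact hg he
    simpa [hne] using (edgeSet_mono (deleteEdges_le _)) (p.edges_subset_edgeSet he)
  exact hu.trans ⟨p.transfer _ hp⟩

end SimpleGraph

lemma labelSet_mono {V M : Type*} (L : V → Set M) {A B : Set V} (h : A ⊆ B) :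
    labelSet L A ⊆ labelSet L B :=
  Set.biUnion_subset_biUnion_left h

lemma Set.singleton_ssubset_iff {α : Type*} {s : Set α} {a : α} :
    {a} ⊂ s ↔ a ∈ s ∧ s ≠ {a} := by
  rw [ssubset_iff_subset_ne, Set.singleton_subset_iff, ne_comm]

lemma ImportantEdge.ssubset_labelSet_edgeSide {V M : Type*} {C : SimpleGraph V}
    (hC : C.IsAcyclic) {L : V → Set M} {μ : M} {e₁ e₂ g₁ g₂ : V}
    (he : ImportantEdge C L μ e₁ e₂)
    (he₁ : e₁ ∈ edgeSide C g₁ g₂) (he₂ : e₂ ∈ edgeSide C g₁ g₂) :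
    {μ} ⊂ labelSet L (edgeSide C g₁ g₂) := by
  obtain ⟨hadj, side₁, side₂⟩ := he
  rw [← Set.singleton_ssubset_iff] at side₁ side₂
  rcases hC.notMem_edgeSide_or hadj g₂ with h | h
  · exact side₁.trans_subset (labelSet_mono L (SimpleGraph.edgeSide_subset_edgeSide he₁ h))
  · exact side₂.trans_subset (labelSet_mono L (SimpleGraph.edgeSide_subset_edgeSide he₂ h))

theorem statement_2_general {V M : Type*} (C : SimpleGraph V) (hC : C.IsTree)
    (L : V → Set M) (μ : M) (e₁ e₂ f₁ f₂ g₁ g₂ : V)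
    (he : ImportantEdge C L μ e₁ e₂) (hf : ImportantEdge C L μ f₁ f₂)
    (hg : C.Adj g₁ g₂)
    (he₁ : e₁ ∈ edgeSide C g₁ g₂) (he₂ : e₂ ∈ edgeSide C g₁ g₂)
    (hf₁ : f₁ ∈ edgeSide C g₂ g₁) (hf₂ : f₂ ∈ edgeSide C g₂ g₁) :
    ImportantEdge C L μ g₁ g₂ := by
  simp only [ImportantEdge, ← Set.singleton_ssubset_iff]
  exact ⟨hg, he.ssubset_labelSet_edgeSide hC.isAcyclic he₁ he₂,
    hf.ssubset_labelSet_edgeSide hC.isAcyclic hf₁ hf₂⟩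

/-- If `e` and `f` are `μ`-important edges of the finite tree `C`, and `g` is
an edge of `C` such that both endpoints of `e` lie in one component of `C − g` and both
endpoints of `f` lie in the other, then `g` is `μ`-important. -/
theorem statement_2 {V M : Type*} [Fintype V] (C : SimpleGraph V) (hC : C.IsTree)
    (L : V → Set M) (μ : M) (e₁ e₂ f₁ f₂ g₁ g₂ : V)
    (he : ImportantEdge C L μ e₁ e₂) (hf : ImportantEdge C L μ f₁ f₂)
    (hg : C.Adj g₁ g₂)
    (he₁ : e₁ ∈ edgeSide C g₁ g₂) (he₂ : e₂ ∈ edgeSide C g₁ g₂)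
    (hf₁ : f₁ ∈ edgeSide C g₂ g₁) (hf₂ : f₂ ∈ edgeSide C g₂ g₁) :
    ImportantEdge C L μ g₁ g₂ :=
  statement_2_general C hC L μ e₁ e₂ f₁ f₂ g₁ g₂ he hf hg he₁ he₂ hf₁ hf₂
end

section
/- If the finite tree C has no μ-important edge, then C has at least one μ-important vertex. -/
/-! Call the side of `uv` containing `u` heavy if its labels are `μ` together with some other
label, and orient each edge towards its heavy sides. Sinks are exactly the `μ`-important vertices,
and with no `μ`-important edge no edge is heavy on both sides. A heavy side `uv` whose vertex set
is minimal then has sink `u`: a heavy side `zu` with `z ≠ v` would be strictly smaller, and `z = v`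
would make `uv` important. -/

section

open SimpleGraph

variable {V M : Type*} {C : SimpleGraph V}

lemma delVertex_le_deleteEdges {v : V} {e : Sym2 V} (h : v ∈ e) :
    delVertex C v ≤ C.deleteEdges {e} :=
  deleteEdges_anti (Set.singleton_subset_iff.2 h)

lemma SimpleGraph.Walk.reachable_delVertex {v a b : V} (q : C.Walk a b) (hv : v ∉ q.support) :
    (delVertex C v).Reachable a b :=
  ⟨q.toDeleteEdges _ fun _ he hve ↦ hv (q.mem_support_of_mem_edges he hve)⟩

lemma SimpleGraph.IsAcyclic.not_mem_edgeSide (hC : C.IsAcyclic) {u v : V} (h : C.Adj u v) :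
    v ∉ edgeSide C u v :=
  isBridge_iff.mp (isAcyclic_iff_forall_adj_isBridge.mp hC h)

lemma SimpleGraph.IsAcyclic.not_mem_support_of_walk_deleteEdges (hC : C.IsAcyclic) {u v x : V}
    (h : C.Adj u v) (p : (C.deleteEdges {s(u, v)}).Walk u x) :
    v ∉ (p.mapLe (deleteEdges_le _)).support := by
  classical
  rw [Walk.support_mapLe_eq_support]
  exact fun hv ↦ hC.not_mem_edgeSide h ⟨p.takeUntil v hv⟩

lemma SimpleGraph.IsAcyclic.edgeSide_eq_vertComp (hC : C.IsAcyclic) {u v : V} (h : C.Adj u v) :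
    edgeSide C u v = vertComp C v u := by
  ext x
  refine ⟨fun ⟨p⟩ ↦ ?_, fun hx ↦ hx.mono (delVertex_le_deleteEdges (Sym2.mem_mk_right u v))⟩
  exact (p.mapLe _).reachable_delVertex (hC.not_mem_support_of_walk_deleteEdges h p)

lemma SimpleGraph.IsAcyclic.edgeSide_ssubset (hC : C.IsAcyclic) {u v w : V}
    (huw : C.Adj u w) (hwv : w ≠ v) : edgeSide C w u ⊂ edgeSide C u v := by
  refine ⟨fun x ⟨p⟩ ↦ ?_, fun hsub ↦ hC.not_mem_edgeSide huw.symm (hsub (Reachable.refl u))⟩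
  have hwx : (C.deleteEdges {s(u, v)}).Reachable w x :=
    ((p.mapLe _).reachable_delVertex (hC.not_mem_support_of_walk_deleteEdges huw.symm p)).mono
      (delVertex_le_deleteEdges (Sym2.mem_mk_left u v))
  refine Reachable.trans (Adj.reachable ?_) hwx
  simp only [deleteEdges_adj, Set.mem_singleton_iff, Sym2.eq_iff]
  exact ⟨huw, by grind [huw.ne]⟩

lemma SimpleGraph.Connected.exists_adj_vertComp_eq (hC : C.Connected) {v w : V} (hw : w ≠ v) :
    ∃ u, C.Adj v u ∧ vertComp C v w = vertComp C v u := by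
  classical
  obtain ⟨q, hq⟩ := (hC v w).some.toPath
  cases q with
  | nil => exact absurd rfl hw
  | @cons _ u _ hadj q =>
    have hr : (delVertex C v).Reachable u w :=
      q.reachable_delVertex (Walk.cons_isPath_iff _ _ |>.mp hq).2
    exact ⟨u, hadj, Set.ext fun x ↦ ⟨hr.trans, hr.symm.trans⟩⟩

def HeavySide (C : SimpleGraph V) (L : V → Set M) (μ : M) (u v : V) : Prop :=
  C.Adj u v ∧ μ ∈ labelSet L (edgeSide C u v) ∧ labelSet L (edgeSide C u v) ≠ {μ}

lemma SimpleGraph.IsTree.importantVertex_of_forall_not_heavySide (hC : C.IsTree) {L : V → Set M}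
    {μ : M} {v : V} (hv : ∀ z, ¬ HeavySide C L μ z v) : ImportantVertex C L μ v := by
  intro w hw
  obtain ⟨u, hadj, hcomp⟩ := hC.connected.exists_adj_vertComp_eq hw
  rw [hcomp, ← hC.isAcyclic.edgeSide_eq_vertComp hadj.symm, or_iff_not_imp_right, not_not]
  exact fun hμ ↦ by_contra fun hne ↦ hv u ⟨hadj.symm, hμ, hne⟩

lemma SimpleGraph.IsAcyclic.exists_forall_not_heavySide [Finite V] [Nonempty V]
    (hC : C.IsAcyclic) {L : V → Set M} {μ : M} (hnoedge : ∀ u v, ¬ ImportantEdge C L μ u v) :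
    ∃ v, ∀ z, ¬ HeavySide C L μ z v := by
  by_cases hheavy : ∃ p : V × V, HeavySide C L μ p.1 p.2
  swap
  · push Not at hheavy
    exact ⟨Classical.arbitrary V, fun z ↦ hheavy (z, _)⟩
  obtain ⟨⟨u, v⟩, huv, hmin⟩ :=
    (InvImage.wf (fun p : V × V ↦ edgeSide C p.1 p.2) wellFounded_lt).has_min
      {p | HeavySide C L μ p.1 p.2} hheavy
  refine ⟨u, fun z hzu ↦ ?_⟩
  by_cases hzv : z = v
  · subst hzv
    exact hnoedge u z ⟨huv.1, huv.2, hzu.2⟩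
  · exact hmin (z, u) hzu (hC.edgeSide_ssubset hzu.1.symm hzv)

end

/-- If the finite tree `C` has no `μ`-important edge, then it has at least
one `μ`-important vertex. -/
theorem statement_3 {V M : Type*} [Fintype V] (C : SimpleGraph V) (hC : C.IsTree)
    (L : V → Set M) (μ : M)
    (hnoedge : ∀ u v : V, ¬ ImportantEdge C L μ u v) :
    ∃ v : V, ImportantVertex C L μ v := by
  have : Nonempty V := hC.connected.nonempty
  obtain ⟨v, hv⟩ := hC.isAcyclic.exists_forall_not_heavySide hnoedge
  exact ⟨v, hC.importantVertex_of_forall_not_heavySide hv⟩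
end

section
/- Let (r, c) be a state on a finite set E. Suppose that for every 4-element subset S ⊆ E the induced state on S is evenable, where the induced state on S consists of the cyclic order that r induces on S together with the restriction of c to pairs of elements of S. Then the state (r, c) itself is evenable. -/
/-- A flip at position `i` of a state `(r, c)`: the values of the rotation `r` at positions
`i` and `i + 1` are exchanged, and the crossing parity between the two affected elements
`r i` and `r (i + 1)` is toggled; everything else is unchanged. -/
def FlipStep (n : ℕ) {E : Type*} [DecidableEq E]
    (s t : (ZMod n → E) × (E → E → ZMod 2)) : Prop :=
  ∃ i : ZMod n,
    (∀ j : ZMod n,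
      t.1 j = if j = i then s.1 (i + 1) else if j = i + 1 then s.1 i else s.1 j) ∧
    (∀ x y : E,
      t.2 x y =
        if (x = s.1 i ∧ y = s.1 (i + 1)) ∨ (x = s.1 (i + 1) ∧ y = s.1 i)
        then s.2 x y + 1 else s.2 x y)

/-- A state `(r, c)` is evenable if some finite sequence of flips leads to a state whose
parity function vanishes on every pair of distinct elements. -/
def Evenable (n : ℕ) {E : Type*} [DecidableEq E]
    (s : (ZMod n → E) × (E → E → ZMod 2)) : Prop :=
  ∃ t : (ZMod n → E) × (E → E → ZMod 2),
    Relation.ReflTransGen (FlipStep n) s t ∧ ∀ x y : E, x ≠ y → t.2 x y = 0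

/-!
Two kinds of flip sequences are available. Flips at positions `i` with `i.val + 1 < n` act as
adjacent transpositions of the linear order of positions, so sorting a rotation `e` into a rotation
`f` toggles exactly the pairs that `e` and `f` order differently. A flip across the wrap-around
position `n - 1` additionally switches its two elements, i.e. toggles every pair containing exactly
one of them; combining such flips with sorting switches the parities by any even set `T`.

Choose `T` so that the switched parities `d` are constant on the row of `r 0`. For positions
`x < y < z` the 4-subset `{r 0, x, y, z}` is evenable, and a flip invariant of 4-element states
turns this into: `d x y = d y z` forces `d x z = d x y`. That is exactly what is needed for the
order of positions, with the pairs where `d = 1` reversed, to be a linear order `f`; sorting the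
switched state into `f` then makes every parity vanish.
-/

open Equiv

section FlipModel

variable {n : ℕ} {E : Type*}

def inversions (e f : ZMod n ≃ E) (x y : E) : ZMod 2 :=
  if ((e.symm x).val < (e.symm y).val ↔ (f.symm x).val < (f.symm y).val) then 0 else 1

theorem inversions_self (e : ZMod n ≃ E) : inversions e e = 0 := by
  ext x y
  simp [inversions]

theorem inversions_comm (e f : ZMod n ≃ E) : inversions e f = inversions f e := by
  ext x y
  simp only [inversions, Iff.comm]

theorem inversions_add_inversions (e f g : ZMod n ≃ E) :
    inversions e f + inversions f g = inversions e g := by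
  ext x y
  simp only [inversions, Pi.add_apply]
  split_ifs <;> first | rfl | tauto

/-- The order `p`, with the pairs `{x, y}` where `d x y = 1` reversed. -/
def reorient (p : E → ℕ) (d : E → E → ZMod 2) (x y : E) : Prop :=
  x ≠ y ∧ (p x < p y ↔ d x y = 0)

theorem isStrictTotalOrder_reorient {p : E → ℕ} (hp : Function.Injective p)
    {d : E → E → ZMod 2} (hsymm : ∀ x y, d x y = d y x)
    (htri : ∀ x y z, p x < p y → p y < p z → d x y = d y z → d x z = d x y) :
    IsStrictTotalOrder E (reorient p d) where
  irrefl _ h := h.1 rfl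
  trichotomous x y hxy hyx := by
    by_contra hne
    have hlt : p y < p x ↔ ¬p x < p y := by have := hp.ne hne; omega
    simp only [reorient, hsymm y x, hlt] at hxy hyx
    tauto
  trans x y z := by
    rintro ⟨hxy, hxy'⟩ ⟨hyz, hyz'⟩
    have hxz : x ≠ z := by
      rintro rfl
      rw [hsymm] at hyz'
      have := hxy'.trans hyz'.symm
      have := hp.ne hxy
      omega
    refine ⟨hxz, ?_⟩
    have := hp.ne hxy
    have := hp.ne hyz
    have := hp.ne hxz
    -- `htri` at whichever ordering of the three positions occurs settles each case
    have := htri x y z; have := htri x z y; have := htri y x z; have := htri y z x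
    have := htri z x y; have := htri z y x
    simp only [hsymm y x, hsymm z x, hsymm z y] at *
    have h2 : ∀ a : ZMod 2, a = 0 ∨ a = 1 := by decide
    rcases h2 (d x y) with h | h <;> rcases h2 (d y z) with h' | h' <;>
      rcases h2 (d x z) with h'' | h'' <;> simp [h, h', h''] at * <;> omega

theorem exists_equiv_val_lt_iff [Fintype E] [NeZero n] (hcard : Fintype.card E = n)
    (r : E → E → Prop) [IsStrictTotalOrder E r] :
    ∃ f : ZMod n ≃ E, ∀ x y, (f.symm x).val < (f.symm y).val ↔ r x y := by
  classical
  let := linearOrderOfSTO r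
  obtain ⟨k, rfl⟩ : ∃ k, n = k + 1 := Nat.exists_eq_add_one_of_ne_zero (NeZero.ne n)
  -- `ZMod (k + 1)` is `Fin (k + 1)` by definition, with `ZMod.val` the coercion to `ℕ`
  exact ⟨(monoEquivOfFin E hcard).toEquiv, fun x y => (monoEquivOfFin E hcard).symm.lt_iff_lt⟩

theorem exists_equiv_inversions_eq [Fintype E] [NeZero n] (hcard : Fintype.card E = n)
    (e : ZMod n ≃ E) {d : E → E → ZMod 2} (hsymm : ∀ x y, d x y = d y x)
    (htri : ∀ x y z, (e.symm x).val < (e.symm y).val → (e.symm y).val < (e.symm z).val →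
      d x y = d y z → d x z = d x y) :
    ∃ f : ZMod n ≃ E, ∀ x y, x ≠ y → inversions e f x y = d x y := by
  have := isStrictTotalOrder_reorient (p := fun x => (e.symm x).val)
    ((ZMod.val_injective n).comp e.symm.injective) hsymm htri
  obtain ⟨f, hf⟩ := exists_equiv_val_lt_iff hcard (reorient (fun x => (e.symm x).val) d)
  refine ⟨f, fun x y hxy => ?_⟩
  have h2 : ∀ a : ZMod 2, a = 0 ∨ a = 1 := by decide
  rcases h2 (d x y) with h | h <;> simp [inversions, hf, reorient, h, hxy]
  omega

theorem ZMod.mclosure_swap_add_one (n : ℕ) [NeZero n] :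
    Submonoid.closure {σ : Perm (ZMod n) | ∃ i : ZMod n, i.val + 1 < n ∧ swap i (i + 1) = σ} =
      ⊤ := by
  obtain ⟨k, rfl⟩ : ∃ k, n = k + 1 := Nat.exists_eq_add_one_of_ne_zero (NeZero.ne n)
  refine top_unique ((Perm.mclosure_swap_castSucc_succ k).ge.trans (Submonoid.closure_mono ?_))
  rintro _ ⟨i, rfl⟩
  refine ⟨i.castSucc, by simp [ZMod.val], ?_⟩
  change swap i.castSucc (i.castSucc + 1) = _
  rw [Fin.coeSucc_eq_succ]

variable [DecidableEq E]

def pairToggle (u v : E) (x y : E) : ZMod 2 :=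
  if (x = u ∧ y = v) ∨ (x = v ∧ y = u) then 1 else 0

def switching (T : Finset E) (x y : E) : ZMod 2 :=
  (if x ∈ T then 1 else 0) + (if y ∈ T then 1 else 0)

theorem switching_empty : switching (∅ : Finset E) = 0 := by
  ext
  simp [switching]

theorem switching_insert {a : E} {S : Finset E} (ha : a ∉ S) :
    switching (insert a S) = switching {a} + switching S := by
  ext x y
  simp only [switching, Pi.add_apply, Finset.mem_insert, Finset.mem_singleton]
  split_ifs <;> first | decide | simp_all

theorem flipStep_iff (e : ZMod n ≃ E) (c : E → E → ZMod 2)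
    (t : (ZMod n → E) × (E → E → ZMod 2)) :
    FlipStep n (⇑e, c) t ↔
      ∃ i, t = (⇑((swap i (i + 1)).trans e), c + pairToggle (e i) (e (i + 1))) := by
  refine exists_congr fun i => ?_
  simp only [Prod.ext_iff, funext_iff]
  refine and_congr (forall_congr' fun j => ?_) (forall₂_congr fun x y => ?_)
  · simp only [trans_apply, swap_apply_def]
    split_ifs <;> rfl
  · simp only [Pi.add_apply, pairToggle]
    split_ifs <;> simp

theorem inversions_swap_of_lt [NeZero n] (e : ZMod n ≃ E) {i : ZMod n} (hi : i.val + 1 < n) :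
    inversions e ((swap i (i + 1)).trans e) = pairToggle (e i) (e (i + 1)) := by
  have hval : (i + 1).val = i.val + 1 := by
    rw [ZMod.val_add_of_lt] <;> rw [ZMod.val_one_eq_one_mod, Nat.one_mod_eq_one.mpr (by omega)]
    omega
  ext x y
  obtain ⟨a, rfl⟩ := e.surjective x
  obtain ⟨b, rfl⟩ := e.surjective y
  simp only [inversions, pairToggle, symm_trans_apply, symm_swap, symm_apply_apply,
    e.apply_eq_iff_eq, swap_apply_def, ← (ZMod.val_injective n).eq_iff, apply_ite ZMod.val, hval]
  split_ifs <;> first | rfl | omega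

theorem inversions_swap_of_eq [NeZero n] (e : ZMod n ≃ E) {i : ZMod n} (hn : 1 < n)
    (hi : i.val + 1 = n) :
    inversions e ((swap i (i + 1)).trans e) =
      pairToggle (e i) (e (i + 1)) + switching {e i, e (i + 1)} := by
  have hval : (i + 1).val = 0 := by
    rw [← ZMod.natCast_zmod_val i, ← Nat.cast_add_one, hi, ZMod.natCast_self, ZMod.val_zero]
  ext x y
  obtain ⟨a, rfl⟩ := e.surjective x
  obtain ⟨b, rfl⟩ := e.surjective y
  have ha := a.val_lt
  have hb := b.val_lt
  simp only [inversions, pairToggle, switching, Pi.add_apply, Finset.mem_insert,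
    Finset.mem_singleton, symm_trans_apply, symm_swap, symm_apply_apply, e.apply_eq_iff_eq,
    swap_apply_def, ← (ZMod.val_injective n).eq_iff, apply_ite ZMod.val, hval]
  split_ifs <;> first | decide | omega

theorem reflTransGen_flipStep_inversions [NeZero n] (e f : ZMod n ≃ E) (c : E → E → ZMod 2) :
    Relation.ReflTransGen (FlipStep n) (⇑e, c) (⇑f, c + inversions e f) := by
  suffices h : ∀ σ : Perm (ZMod n), ∀ c, Relation.ReflTransGen (FlipStep n)
      (⇑(σ.trans f), c) (⇑f, c + inversions (σ.trans f) f) by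
    simpa [Equiv.trans_assoc] using h (e.trans f.symm) c
  intro σ
  induction σ using Submonoid.induction_of_closure_eq_top_right (ZMod.mclosure_swap_add_one n) with
  | one =>
    intro c
    rw [show (1 : Perm (ZMod n)).trans f = f from f.refl_trans, inversions_self, add_zero]
  | mul_right σ τ hτ ih =>
    obtain ⟨i, hi, rfl⟩ := hτ
    intro c
    set e := (σ * swap i (i + 1)).trans f
    have he : (swap i (i + 1)).trans e = σ.trans f := by ext; simp [e]
    refine .head ((flipStep_iff e c _).2 ⟨i, rfl⟩) ?_
    rw [he]
    convert ih _ using 2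
    rw [add_assoc, ← he, ← inversions_swap_of_lt e hi, inversions_add_inversions]

theorem exists_equiv_apply_eq_apply_eq (e : ZMod n ≃ E) {a b : ZMod n} (hab : a ≠ b) {u w : E}
    (huw : u ≠ w) : ∃ f : ZMod n ≃ E, f a = u ∧ f b = w := by
  set g := e.trans (swap (e a) u)
  have hga : g a = u := by simp [g]
  refine ⟨g.trans (swap (g b) w), ?_, by simp⟩
  rw [trans_apply, hga, swap_apply_of_ne_of_ne (hga ▸ g.injective.ne hab) huw]

theorem reflTransGen_flipStep_switching_pair [NeZero n] (e : ZMod n ≃ E) (c : E → E → ZMod 2)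
    {u w : E} (huw : u ≠ w) :
    Relation.ReflTransGen (FlipStep n) (⇑e, c) (⇑e, c + switching {u, w}) := by
  -- makes `E → E → ZMod 2` a ring of characteristic 2 for `grind` below
  have : Nonempty E := ⟨u⟩
  have : Nontrivial (ZMod n) := ⟨e.symm u, e.symm w, by simpa using huw⟩
  have hn : 1 < n := by
    have := ZMod.nontrivial_iff.1 this
    have := NeZero.ne n
    omega
  set i : ZMod n := ((n - 1 : ℕ) : ZMod n)
  have hi : i.val + 1 = n := by rw [ZMod.val_natCast_of_lt (by omega)]; omega
  -- sort `u, w` to the two sides of the wrap-around position, flip them there, and sort back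
  obtain ⟨f, hfu, hfw⟩ := exists_equiv_apply_eq_apply_eq e (by simp : i ≠ i + 1) huw
  have hwrap := inversions_swap_of_eq f hn hi
  rw [hfu, hfw] at hwrap
  refine (reflTransGen_flipStep_inversions e f c).trans
    (.head ((flipStep_iff f _ _).2 ⟨i, rfl⟩) ?_)
  convert reflTransGen_flipStep_inversions _ e _ using 2
  have := inversions_add_inversions f ((swap i (i + 1)).trans f) e
  rw [hwrap, inversions_comm f e] at this
  rw [hfu, hfw]
  grind

theorem reflTransGen_flipStep_switching [NeZero n] (e : ZMod n ≃ E) (c : E → E → ZMod 2)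
    {T : Finset E} (hT : Even T.card) :
    Relation.ReflTransGen (FlipStep n) (⇑e, c) (⇑e, c + switching T) := by
  induction T using Finset.strongInduction generalizing c with
  | H T ih =>
  obtain rfl | ⟨u, hu⟩ := T.eq_empty_or_nonempty
  · rw [switching_empty, add_zero]
  have hcard := Finset.card_erase_of_mem hu
  obtain ⟨w, hw⟩ : (T.erase u).Nonempty := by
    rw [← Finset.card_pos, hcard]
    have := Finset.card_pos.2 ⟨u, hu⟩
    rcases hT with ⟨k, hk⟩
    omega
  obtain ⟨hwu, hwT⟩ := Finset.mem_erase.1 hw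
  set T' := (T.erase u).erase w
  have hsw : switching T = switching {u, w} + switching T' := by
    rw [← Finset.insert_erase hu, ← Finset.insert_erase hw, switching_insert, switching_insert,
      switching_insert (Finset.notMem_singleton.2 hwu.symm), add_assoc]
    · simp
    · simpa using hwu.symm
  refine (reflTransGen_flipStep_switching_pair e c hwu.symm).trans ?_
  rw [hsw, ← add_assoc]
  refine ih T' ((Finset.erase_ssubset hw).trans (Finset.erase_ssubset hu)) _ ?_
  rw [Finset.card_erase_of_mem hw, hcard]
  obtain ⟨k, hk⟩ := hT
  have := Finset.card_pos.2 ⟨w, hw⟩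
  exact ⟨k - 1, by omega⟩

/-- The parity of the number of crossings between the pairs `{a, b}` and `{x, y}`. -/
def pairCross (c : E → E → ZMod 2) (a b x y : E) : ZMod 2 :=
  c a x + c a y + c b x + c b y

theorem pairCross_add_switching (c : E → E → ZMod 2) (T : Finset E) (a b x y : E) :
    pairCross (c + switching T) a b x y = pairCross c a b x y := by
  simp only [pairCross, switching, Pi.add_apply]
  grind

def pairCrosses (c : ZMod 4 → ZMod 4 → ZMod 2) : ZMod 2 × ZMod 2 × ZMod 2 :=
  (pairCross c 0 1 2 3, pairCross c 0 2 1 3, pairCross c 0 3 1 2)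

theorem pairCrosses_add (c d : ZMod 4 → ZMod 4 → ZMod 2) :
    pairCrosses (c + d) = pairCrosses c + pairCrosses d := by
  simp only [pairCrosses, pairCross, Pi.add_apply, Prod.mk_add_mk]
  ext <;> simp only <;> ring

/-- Which of `1`, `2`, `3` sits opposite to `0` in the 4-cycle `σ`. -/
def diagonals (σ : Perm (ZMod 4)) : ZMod 2 × ZMod 2 × ZMod 2 :=
  (if σ.symm 1 = σ.symm 0 + 2 then 1 else 0, if σ.symm 2 = σ.symm 0 + 2 then 1 else 0,
    if σ.symm 3 = σ.symm 0 + 2 then 1 else 0)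

theorem diagonals_swap (σ : Perm (ZMod 4)) (i : ZMod 4) :
    diagonals ((swap i (i + 1)).trans σ) + pairCrosses (pairToggle (σ i) (σ (i + 1))) =
      diagonals σ := by
  revert σ i
  decide

theorem diagonals_ne (σ : Perm (ZMod 4)) : diagonals σ ≠ (1, 1, 1) := by
  revert σ
  decide

theorem exists_perm_pairCrosses_add_diagonals_eq (σ : Perm (ZMod 4))
    (c : ZMod 4 → ZMod 4 → ZMod 2) {t : (ZMod 4 → ZMod 4) × (ZMod 4 → ZMod 4 → ZMod 2)}
    (h : Relation.ReflTransGen (FlipStep 4) (⇑σ, c) t) :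
    ∃ τ : Perm (ZMod 4), t.1 = ⇑τ ∧
      pairCrosses t.2 + diagonals τ = pairCrosses c + diagonals σ := by
  induction h with
  | refl => exact ⟨σ, rfl, rfl⟩
  | @tail s t _ hst ih =>
    obtain ⟨τ, hτ, hinv⟩ := ih
    obtain ⟨s1, d⟩ := s
    dsimp only at hτ hinv
    subst hτ
    obtain ⟨i, rfl⟩ := (flipStep_iff τ d t).1 hst
    refine ⟨_, rfl, ?_⟩
    rw [pairCrosses_add, add_assoc, add_comm _ (diagonals _), diagonals_swap, hinv]

theorem pairCrosses_ne_of_evenable (c : ZMod 4 → ZMod 4 → ZMod 2) (h : Evenable 4 (id, c)) :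
    pairCrosses c ≠ (1, 0, 1) := by
  obtain ⟨t, hreach, hzero⟩ := h
  obtain ⟨τ, -, hinv⟩ := exists_perm_pairCrosses_add_diagonals_eq 1 c hreach
  have : pairCrosses t.2 = 0 := by
    simp (disch := decide) only [pairCrosses, pairCross, hzero]
    rfl
  intro hc
  rw [this, hc, zero_add] at hinv
  exact diagonals_ne τ (hinv.trans (by decide))

theorem transitive_parity_of_evenable_four [NeZero n] (e : ZMod n ≃ E) {c d : E → E → ZMod 2}
    (h4 : ∀ p : ZMod 4 → ZMod n, (∀ j k : ZMod 4, j.val < k.val → (p j).val < (p k).val) →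
      Evenable 4 ((id : ZMod 4 → ZMod 4), fun j k : ZMod 4 => c (e (p j)) (e (p k))))
    (hcd : ∀ a b x y, pairCross d a b x y = pairCross c a b x y) (hsymm : ∀ x y, d x y = d y x)
    {κ : ZMod 2} (hrow : ∀ x, x ≠ e 0 → d (e 0) x = κ)
    {x y z : E} (hxy : (e.symm x).val < (e.symm y).val) (hyz : (e.symm y).val < (e.symm z).val)
    (h : d x y = d y z) : d x z = d x y := by
  have hne0 : ∀ w, (e.symm x).val < (e.symm w).val → w ≠ e 0 := by
    rintro w hw rfl
    simp at hw
  have hy := hne0 y hxy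
  have hz := hne0 z (hxy.trans hyz)
  by_cases hx : x = e 0
  · subst hx
    rw [hrow z hz, hrow y hy]
  have hpos : ∀ w, w ≠ e 0 → e.symm w ≠ 0 := fun w hw => by rwa [Ne, e.symm_apply_eq]
  obtain ⟨p, hp0, hp1, hp2, hp3⟩ : ∃ p : ZMod 4 → ZMod n,
      p 0 = 0 ∧ p 1 = e.symm x ∧ p 2 = e.symm y ∧ p 3 = e.symm z :=
    ⟨![0, e.symm x, e.symm y, e.symm z], rfl, rfl, rfl, rfl⟩
  have hmono : ∀ j k : ZMod 4, j.val < k.val → (p j).val < (p k).val := by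
    have hcases : ∀ j : ZMod 4, j = 0 ∨ j = 1 ∨ j = 2 ∨ j = 3 := by decide
    intro j k hjk
    rcases hcases j with rfl | rfl | rfl | rfl <;> rcases hcases k with rfl | rfl | rfl | rfl <;>
      first
        | (exfalso; revert hjk; decide)
        | (simp [hp0, hp1, hp2, hp3, hpos _ hx, hpos _ hy, hpos _ hz] <;> omega)
  have hcross : (pairCross c (e (p 0)) (e (p 1)) (e (p 2)) (e (p 3)),
      pairCross c (e (p 0)) (e (p 2)) (e (p 1)) (e (p 3)),
      pairCross c (e (p 0)) (e (p 3)) (e (p 1)) (e (p 2))) ≠ (1, 0, 1) :=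
    pairCrosses_ne_of_evenable _ (h4 p hmono)
  simp only [hp0, hp1, hp2, hp3, e.apply_symm_apply, ← hcd] at hcross
  -- with the row of `e 0` constant, the crossing parities are `dxy+dxz`, `dxy+dyz`, `dxz+dyz`
  simp only [pairCross, hrow x hx, hrow y hy, hrow z hz, hsymm y x, hsymm z x, hsymm z y] at hcross
  have key : ∀ κ a b b' : ZMod 2, a = b' →
      (κ + κ + a + b, κ + κ + a + b', κ + κ + b + b') ≠ (1, 0, 1) → b = a := by decide
  exact key _ _ _ _ h hcross

theorem Finset.exists_even_card_erase_eq (S : Finset E) (a : E) :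
    ∃ T : Finset E, Even T.card ∧ T.erase a = S.erase a := by
  by_cases h : Even (S.erase a).card
  · exact ⟨S.erase a, h, by simp⟩
  · refine ⟨insert a (S.erase a), ?_, by simp⟩
    rw [Finset.card_insert_of_notMem (by simp)]
    exact (Nat.not_even_iff_odd.1 h).add_one

theorem exists_switching_row_eq [Fintype E] (c : E → E → ZMod 2) (a : E) :
    ∃ T : Finset E, Even T.card ∧ ∃ κ, ∀ x, x ≠ a → (c + switching T) a x = κ := by
  obtain ⟨T, hT, hTa⟩ := (Finset.univ.filter (c a · = 1)).exists_even_card_erase_eq a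
  refine ⟨T, hT, if a ∈ T then 1 else 0, fun x hx => ?_⟩
  have hxT : x ∈ T ↔ c a x = 1 := by
    simpa [hx] using congrArg (x ∈ ·) hTa
  simp only [Pi.add_apply, switching, hxT]
  generalize c a x = v, (if a ∈ T then (1 : ZMod 2) else 0) = κ
  revert v κ
  decide

end FlipModel

theorem statement_6_general {n : ℕ} (hn : 1 ≤ n) {E : Type*} [DecidableEq E] [Fintype E]
    (hcard : Fintype.card E = n)
    (r : ZMod n → E) (hr : Function.Bijective r)
    (c : E → E → ZMod 2) (hsymm : ∀ x y : E, c x y = c y x)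
    (h4 : ∀ p : ZMod 4 → ZMod n,
      (∀ j k : ZMod 4, j.val < k.val → (p j).val < (p k).val) →
      Evenable 4 ((id : ZMod 4 → ZMod 4), fun j k : ZMod 4 => c (r (p j)) (r (p k)))) :
    Evenable n (r, c) := by
  have : NeZero n := ⟨by omega⟩
  set e := Equiv.ofBijective r hr
  obtain ⟨T, hT, κ, hrow⟩ := exists_switching_row_eq c (e 0)
  have hsymmT : ∀ x y, (c + switching T) x y = (c + switching T) y x := fun x y => by
    simp only [Pi.add_apply, switching, hsymm x y, add_comm (ite (x ∈ T) _ _)]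
  obtain ⟨f, hf⟩ := exists_equiv_inversions_eq hcard e hsymmT fun x y z =>
    transitive_parity_of_evenable_four e h4 (pairCross_add_switching c T) hsymmT hrow
  refine ⟨_, (reflTransGen_flipStep_switching e c hT).trans
    (reflTransGen_flipStep_inversions e f _), fun x y hxy => ?_⟩
  have := hf x y hxy
  simp only [Pi.add_apply] at this ⊢
  rw [this, CharTwo.add_self_eq_zero]

/-- If for every 4-element subset `S` of `E` the state induced on `S`
(the cyclic order that `r` induces on `S`, together with the restriction of `c`) is
evenable, then the state `(r, c)` itself is evenable. A 4-element subset is encoded by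
the (unique) enumeration `p` of its positions that is strictly increasing with respect
to `ZMod.val`, and the induced state lives on `ZMod 4` with the identity rotation. -/
theorem statement_6 {n : ℕ} (hn : 1 ≤ n) {E : Type*} [DecidableEq E] [Fintype E]
    (hcard : Fintype.card E = n)
    (r : ZMod n → E) (hr : Function.Bijective r)
    (c : E → E → ZMod 2) (hsymm : ∀ x y : E, c x y = c y x) (hdiag : ∀ x : E, c x x = 0)
    (h4 : ∀ p : ZMod 4 → ZMod n,
      (∀ j k : ZMod 4, j.val < k.val → (p j).val < (p k).val) →
      Evenable 4 ((id : ZMod 4 → ZMod 4), fun j k : ZMod 4 => c (r (p j)) (r (p k)))) :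
    Evenable n (r, c) :=
  statement_6_general hn hcard r hr c hsymm h4
end

section
/- Consider the state on the 4-element set E = {e₁, e₂, e₃, e₄} whose rotation is the cyclic order (e₁, e₂, e₃, e₄) (i.e. r(i) = e_{i+1} for i ∈ ZMod 4) and whose parity function c is zero on every pair except c(e₂, e₄) = c(e₄, e₂) = 1. This state is not evenable: no finite sequence of flips leads to a state whose parity function vanishes on all pairs of distinct elements. -/
/-!
For even `n`, a flip at `i` moves `r (i + 1)` one position down and `r i` one position up,
and changes the number of odd crossings of each of them by one. Hence the values of
`deg_c (r j) + j (mod 2)` at positions `i` and `i + 1` are exchanged and all others kept, so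
the set of these values is invariant under flips. For the given state it is `{0}`, whereas
for a state with all crossings even it contains the parity of `j = 1`.
-/

open Finset

section Flip

variable {n : ℕ} {E : Type*}

lemma FlipStep.fst_eq {s t : (ZMod n → E) × (E → E → ZMod 2)} {i : ZMod n}
    (hr : ∀ j, t.1 j = if j = i then s.1 (i + 1) else if j = i + 1 then s.1 i else s.1 j) :
    t.1 = s.1 ∘ Equiv.swap i (i + 1) := by
  funext j
  rw [hr, Function.comp_apply, Equiv.swap_apply_def]
  split_ifs with h1 h2 <;> simp_all

variable [DecidableEq E]

def parityDegree [Fintype E] (c : E → E → ZMod 2) (x : E) : ZMod 2 :=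
  ∑ y ∈ univ.erase x, c x y

/-- The paper's vector `z`, read in the positions of the rotation. -/
def degreeDefect [Fintype E] (h2 : 2 ∣ n) (s : (ZMod n → E) × (E → E → ZMod 2)) :
    ZMod n → ZMod 2 :=
  fun j => parityDegree s.2 (s.1 j) + ZMod.castHom h2 (ZMod 2) j

lemma parityDegree_eq_zero [Fintype E] {c : E → E → ZMod 2}
    (hc : ∀ x y, x ≠ y → c x y = 0) (x : E) : parityDegree c x = 0 :=
  sum_eq_zero fun y hy => hc x y (ne_of_mem_erase hy).symm

lemma parityDegree_toggle [Fintype E] {c c' : E → E → ZMod 2} {a b : E} (hab : a ≠ b)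
    (hc : ∀ x y, c' x y = if (x = a ∧ y = b) ∨ (x = b ∧ y = a) then c x y + 1 else c x y)
    (x : E) : parityDegree c' x = parityDegree c x + if x = a ∨ x = b then 1 else 0 := by
  have hc' : ∀ y, c' x y = c x y + if (x = a ∧ y = b) ∨ (x = b ∧ y = a) then 1 else 0 := by
    intro y; rw [hc]; split_ifs <;> simp
  simp only [parityDegree, hc', sum_add_distrib, add_right_inj]
  by_cases ha : x = a
  · subst ha; simp [hab, hab.symm]
  · by_cases hb : x = b
    · subst hb; simp [ha, Ne.symm ha]
    · simp [ha, hb]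

lemma FlipStep.injective {s t : (ZMod n → E) × (E → E → ZMod 2)} (hst : FlipStep n s t)
    (hs : Function.Injective s.1) : Function.Injective t.1 := by
  obtain ⟨i, hr, -⟩ := hst
  rw [FlipStep.fst_eq hr]
  exact hs.comp (Equiv.injective _)

lemma FlipStep.range_degreeDefect [Fintype E] (h2 : 2 ∣ n)
    {s t : (ZMod n → E) × (E → E → ZMod 2)} (hst : FlipStep n s t)
    (hs : Function.Injective s.1) :
    Set.range (degreeDefect h2 t) = Set.range (degreeDefect h2 s) := by
  obtain ⟨i, hr, hc⟩ := hst
  have hi : i + 1 ≠ i := fun h => by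
    have : (1 : ZMod n) = 0 := by linear_combination h
    have : n = 1 := ZMod.one_eq_zero_iff.mp this
    omega
  have hab : s.1 i ≠ s.1 (i + 1) := fun h => hi (hs h).symm
  have hpar : ZMod.castHom h2 (ZMod 2) (i + 1) = ZMod.castHom h2 (ZMod 2) i + 1 := by
    rw [map_add, map_one]
  suffices degreeDefect h2 t = degreeDefect h2 s ∘ Equiv.swap i (i + 1) by
    rw [this, Set.range_comp, Equiv.range_eq_univ, Set.image_univ]
  funext j
  simp only [degreeDefect, parityDegree_toggle hab hc, hr, Function.comp_apply,
    Equiv.swap_apply_def]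
  by_cases hj : j = i
  · simp only [hj, if_true, or_true, hpar]
    ring
  · by_cases hj' : j = i + 1
    · simp only [hj', hi, if_false, if_true, true_or, hpar]
      linear_combination (by decide : (1 : ZMod 2) + 1 = 0)
    · simp [hj, hj', hs.ne hj, hs.ne hj']

lemma range_degreeDefect_of_reflTransGen [Fintype E] (h2 : 2 ∣ n)
    {s t : (ZMod n → E) × (E → E → ZMod 2)} (hst : Relation.ReflTransGen (FlipStep n) s t)
    (hs : Function.Injective s.1) :
    Set.range (degreeDefect h2 t) = Set.range (degreeDefect h2 s) := by
  suffices Function.Injective t.1 ∧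
      Set.range (degreeDefect h2 t) = Set.range (degreeDefect h2 s) from this.2
  induction hst with
  | refl => exact ⟨hs, rfl⟩
  | tail _ hstep ih =>
    exact ⟨hstep.injective ih.1, (hstep.range_degreeDefect h2 ih.1).trans ih.2⟩

end Flip

/-- The state on a 4-element set whose rotation is the cyclic order
`(e₁, e₂, e₃, e₄)` and whose parity function is zero except on the interleaved pair
`{e₂, e₄}` is not evenable. Here the 4-element set is `ZMod 4` with `e_{i+1}` sitting at
position `i`, so the rotation is the identity and the odd pair is `{1, 3}`. -/
theorem statement_7 :
    ¬ Evenable 4 ((id : ZMod 4 → ZMod 4),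
      fun x y : ZMod 4 =>
        if (x = 1 ∧ y = 3) ∨ (x = 3 ∧ y = 1) then (1 : ZMod 2) else 0) := by
  rintro ⟨t, hst, heven⟩
  have h2 : 2 ∣ 4 := by norm_num
  have hone : (1 : ZMod 2) ∈ Set.range (degreeDefect h2 t) :=
    ⟨1, by rw [degreeDefect, parityDegree_eq_zero heven, zero_add]; rfl⟩
  rw [range_degreeDefect_of_reflTransGen h2 hst Function.injective_id] at hone
  revert hone
  decide +revert
end

section
/- Let (r, c) be a state on a finite set E and let e ∈ E be a designated element. Then there is a finite sequence of flips leading from (r, c) to a state (r′, c′) such that c′(e, x) = 0 for every x ∈ E. -/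
open Function

abbrev FlipState (n : ℕ) (E : Type*) := (ZMod n → E) × (E → E → ZMod 2)

section Flips

variable {n : ℕ} {E : Type*} [DecidableEq E]

def flipAt (s : FlipState n E) (i : ZMod n) : FlipState n E :=
  (s.1 ∘ Equiv.swap i (i + 1), fun x y =>
    if (x = s.1 i ∧ y = s.1 (i + 1)) ∨ (x = s.1 (i + 1) ∧ y = s.1 i)
    then s.2 x y + 1 else s.2 x y)

theorem flipStep_flipAt (s : FlipState n E) (i : ZMod n) : FlipStep n s (flipAt s i) :=
  ⟨i, fun j => by simp only [flipAt, comp_apply, Equiv.swap_apply_def]; split_ifs <;> rfl,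
    fun _ _ => rfl⟩

theorem FlipStep.bijective {s t : FlipState n E} (h : FlipStep n s t) (hs : Bijective s.1) :
    Bijective t.1 := by
  obtain ⟨i, hfst, -⟩ := h
  have : t.1 = s.1 ∘ Equiv.swap i (i + 1) := by
    funext j
    rw [hfst j, comp_apply, Equiv.swap_apply_def]
    split_ifs <;> rfl
  exact this ▸ hs.comp (Equiv.bijective _)

theorem bijective_of_reflTransGen_flipStep {s t : FlipState n E}
    (h : Relation.ReflTransGen (FlipStep n) s t) (hs : Bijective s.1) : Bijective t.1 := by
  induction h with
  | refl => exact hs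
  | tail _ hstep ih => exact hstep.bijective ih

theorem flipAt_fst_of_ne (s : FlipState n E) {i j : ZMod n} (hi : j ≠ i) (hi' : j ≠ i + 1) :
    (flipAt s i).1 j = s.1 j := by
  simp [flipAt, Equiv.swap_apply_of_ne_of_ne hi hi']

theorem flipAt_fst_self (s : FlipState n E) (i : ZMod n) : (flipAt s i).1 i = s.1 (i + 1) := by
  simp [flipAt]

theorem flipAt_snd_of_ne (s : FlipState n E) {i : ZMod n} {x : E} (hx : x ≠ s.1 i)
    (hx' : x ≠ s.1 (i + 1)) : (flipAt s i).2 x = s.2 x :=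
  funext fun _ => if_neg (by tauto)

theorem flipAt_snd_self (s : FlipState n E) {i : ZMod n} (h : s.1 i ≠ s.1 (i + 1)) :
    (flipAt s i).2 (s.1 i) = s.2 (s.1 i) + Pi.single (s.1 (i + 1)) 1 := by
  funext y
  by_cases hy : y = s.1 (i + 1)
  · subst hy
    simp [flipAt]
  · simp [flipAt, hy, h]

theorem natCast_ne_zero_of_pos_of_lt {d : ℕ} (hd : 0 < d) (hdn : d < n) : (d : ZMod n) ≠ 0 :=
  fun h => hd.ne' (by rw [← ZMod.val_cast_of_lt hdn, h, ZMod.val_zero])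

theorem exists_reflTransGen_flipStep_snd_eq_add_single {s : FlipState n E} (hs : Injective s.1)
    (i : ZMod n) {d : ℕ} (hd : 0 < d) (hdn : d < n) :
    ∃ t, Relation.ReflTransGen (FlipStep n) s t ∧
      t.2 (s.1 i) = s.2 (s.1 i) + Pi.single (s.1 (i + d)) 1 := by
  induction d, hd using Nat.le_induction generalizing s with
  | base =>
    have hne : i ≠ i + 1 := by
      simpa using natCast_ne_zero_of_pos_of_lt (n := n) Nat.one_pos hdn
    exact ⟨flipAt s i, .single (flipStep_flipAt s i),
      by rw [flipAt_snd_self s (hs.ne hne), Nat.cast_one]⟩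
  | succ d hd ih =>
    have hd' : d < n := by omega
    have hij : i ≠ i + d := by simpa using natCast_ne_zero_of_pos_of_lt hd hd'
    have hij' : i ≠ i + d + 1 := by
      simpa [add_assoc] using natCast_ne_zero_of_pos_of_lt (d.succ_pos) hdn
    obtain ⟨t, hs't, ht⟩ := ih (s := flipAt s (i + d)) (hs.comp (Equiv.injective _)) hd'
    refine ⟨t, .head (flipStep_flipAt s (i + d)) hs't, ?_⟩
    rw [flipAt_fst_of_ne s hij hij', flipAt_snd_of_ne s (hs.ne hij) (hs.ne hij'),
      flipAt_fst_self] at ht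
    rwa [Nat.cast_succ, ← add_assoc]

theorem exists_reflTransGen_flipStep_snd_eq_add_single_of_ne [NeZero n] {s : FlipState n E}
    (hs : Bijective s.1) {a x : E} (hx : x ≠ a) :
    ∃ t, Relation.ReflTransGen (FlipStep n) s t ∧ t.2 a = s.2 a + Pi.single x 1 := by
  obtain ⟨i, rfl⟩ := hs.2 a
  obtain ⟨k, rfl⟩ := hs.2 x
  have hki : k - i ≠ 0 := sub_ne_zero.mpr (ne_of_apply_ne s.1 hx)
  have hk : i + ((k - i).val : ZMod n) = k := by rw [ZMod.natCast_zmod_val, add_sub_cancel]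
  simpa only [hk] using
    exists_reflTransGen_flipStep_snd_eq_add_single hs.1 i (ZMod.val_pos.mpr hki) (ZMod.val_lt _)

theorem exists_reflTransGen_flipStep_add_sum_single [NeZero n] {s : FlipState n E}
    (hs : Bijective s.1) {a : E} (S : Finset E) (ha : a ∉ S) :
    ∃ t, Relation.ReflTransGen (FlipStep n) s t ∧ t.2 a = s.2 a + ∑ x ∈ S, Pi.single x 1 := by
  induction S using Finset.induction_on with
  | empty => exact ⟨s, .refl, by simp⟩
  | insert x S hxS ih =>
    obtain ⟨t, hst, ht⟩ := ih (fun h => ha (Finset.mem_insert_of_mem h))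
    obtain ⟨u, htu, hu⟩ := exists_reflTransGen_flipStep_snd_eq_add_single_of_ne
      (bijective_of_reflTransGen_flipStep hst hs) (a := a) (x := x)
      (fun h => ha (h ▸ Finset.mem_insert_self x S))
    refine ⟨u, hst.trans htu, ?_⟩
    rw [hu, ht, Finset.sum_insert hxS]
    abel

theorem exists_reflTransGen_flipStep_snd_eq [NeZero n] [Fintype E] {s : FlipState n E}
    (hs : Bijective s.1) (a : E) (g : E → ZMod 2) (hg : g a = s.2 a a) :
    ∃ t, Relation.ReflTransGen (FlipStep n) s t ∧ t.2 a = g := by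
  obtain ⟨t, hst, ht⟩ := exists_reflTransGen_flipStep_add_sum_single hs (a := a)
    (Finset.univ.filter fun x => g x ≠ s.2 a x) (by simp [hg])
  refine ⟨t, hst, funext fun x => ?_⟩
  have key : ∀ u v : ZMod 2, (u + if v = u then 0 else 1) = v := by decide
  simpa [ht, Finset.sum_apply, Pi.single_apply] using key (s.2 a x) (g x)

end Flips

theorem statement_8_general {n : ℕ} (hn : 1 ≤ n) {E : Type*} [DecidableEq E] [Fintype E]
    (r : ZMod n → E) (hr : Function.Bijective r)
    (c : E → E → ZMod 2) (hdiag : ∀ x : E, c x x = 0)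
    (e : E) :
    ∃ t : (ZMod n → E) × (E → E → ZMod 2),
      Relation.ReflTransGen (FlipStep n) (r, c) t ∧ ∀ x : E, t.2 e x = 0 := by
  have : NeZero n := ⟨by omega⟩
  obtain ⟨t, hst, ht⟩ := exists_reflTransGen_flipStep_snd_eq (s := (r, c)) hr e 0 (hdiag e).symm
  exact ⟨t, hst, congrFun ht⟩

/-- From any state `(r, c)` on a finite set `E` with a designated element `e`,
some finite sequence of flips reaches a state `(r′, c′)` with `c′ e x = 0` for all `x`. -/
theorem statement_8 {n : ℕ} (hn : 1 ≤ n) {E : Type*} [DecidableEq E] [Fintype E]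
    (hcard : Fintype.card E = n)
    (r : ZMod n → E) (hr : Function.Bijective r)
    (c : E → E → ZMod 2) (hsymm : ∀ x y : E, c x y = c y x) (hdiag : ∀ x : E, c x x = 0)
    (e : E) :
    ∃ t : (ZMod n → E) × (E → E → ZMod 2),
      Relation.ReflTransGen (FlipStep n) (r, c) t ∧ ∀ x : E, t.2 e x = 0 :=
  statement_8_general hn r hr c hdiag e
end

section
/- Every state on a finite set E with |E| ≤ 3 is evenable: for n ≤ 3, from any state on an n-element set some finite sequence of flips reaches a state whose parity function vanishes on all pairs of distinct elements. -/
/-! For `n ≤ 3` any two distinct positions of `ZMod n` are cyclically adjacent, so any two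
distinct elements of `E` sit next to each other in every rotation. Hence a single flip toggles the
parity of any chosen pair and of nothing else, and the odd pairs can be made even one at a time. -/

section Flip

variable {n : ℕ} {E : Type*} [DecidableEq E]

def IsState (s : (ZMod n → E) × (E → E → ZMod 2)) : Prop :=
  Function.Bijective s.1 ∧ ∀ x y, s.2 x y = s.2 y x

def togglePair (c : E → E → ZMod 2) (x y : E) : E → E → ZMod 2 :=
  fun u v => if s(u, v) = s(x, y) then c u v + 1 else c u v

lemma togglePair_comm (c : E → E → ZMod 2) (x y : E) : togglePair c x y = togglePair c y x := by
  funext u v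
  rw [togglePair, togglePair, Sym2.eq_swap (a := x)]

lemma togglePair_apply_of_ne {c : E → E → ZMod 2} {x y u v : E} (h : s(u, v) ≠ s(x, y)) :
    togglePair c x y u v = c u v :=
  if_neg h

lemma togglePair_apply_self_of_ne_zero {c : E → E → ZMod 2} {x y : E} (h : c x y ≠ 0) :
    togglePair c x y x y = 0 := by
  rw [togglePair, if_pos rfl, Fin.eq_one_of_ne_zero _ h]
  rfl

lemma flipStep_swap_togglePair (r : ZMod n → E) (c : E → E → ZMod 2) (i : ZMod n) :
    FlipStep n (r, c) (r ∘ Equiv.swap i (i + 1), togglePair c (r i) (r (i + 1))) := by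
  refine ⟨i, fun j => ?_, fun u v => ?_⟩
  · simp only [Function.comp_apply, Equiv.swap_apply_def]
    split_ifs <;> rfl
  · simp only [togglePair, Sym2.eq_iff]

lemma IsState.swap_togglePair {r : ZMod n → E} {c : E → E → ZMod 2} (hs : IsState (r, c))
    (i : ZMod n) : IsState (r ∘ Equiv.swap i (i + 1), togglePair c (r i) (r (i + 1))) := by
  obtain ⟨hr, hc⟩ := hs
  refine ⟨hr.comp (Equiv.swap i (i + 1)).bijective, fun u v => ?_⟩
  simp only [togglePair, Sym2.eq_swap (a := v)]
  rw [show c u v = c v u from hc u v]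

variable (hadj : ∀ i j : ZMod n, i ≠ j → j = i + 1 ∨ i = j + 1)
include hadj

lemma exists_reach_pair_eq_zero {s : (ZMod n → E) × (E → E → ZMod 2)} (hs : IsState s)
    {x y : E} (hxy : x ≠ y) :
    ∃ t, Relation.ReflTransGen (FlipStep n) s t ∧ IsState t ∧ t.2 x y = 0 ∧
      ∀ u v, s(u, v) ≠ s(x, y) → t.2 u v = s.2 u v := by
  obtain ⟨r, c⟩ := s
  by_cases h0 : c x y = 0
  · exact ⟨(r, c), .refl, hs, h0, fun _ _ _ => rfl⟩
  obtain ⟨i, rfl⟩ := hs.1.2 x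
  obtain ⟨j, rfl⟩ := hs.1.2 y
  have hij : i ≠ j := fun h => hxy (congrArg r h)
  suffices ∃ k, togglePair c (r k) (r (k + 1)) = togglePair c (r i) (r j) from
    let ⟨k, hk⟩ := this
    ⟨_, .single (flipStep_swap_togglePair r c k), hk ▸ hs.swap_togglePair k,
      hk ▸ togglePair_apply_self_of_ne_zero h0,
      fun _ _ h => hk ▸ togglePair_apply_of_ne h⟩
  rcases hadj i j hij with rfl | rfl
  · exact ⟨i, rfl⟩
  · exact ⟨j, togglePair_comm _ _ _⟩

lemma exists_reach_forall_mem_eq_zero {s : (ZMod n → E) × (E → E → ZMod 2)} (hs : IsState s)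
    (S : Finset (E × E)) (hS : ∀ p ∈ S, p.1 ≠ p.2) :
    ∃ t, Relation.ReflTransGen (FlipStep n) s t ∧ IsState t ∧
      ∀ p ∈ S, t.2 p.1 p.2 = 0 := by
  induction S using Finset.induction_on with
  | empty => exact ⟨s, .refl, hs, by simp⟩
  | @insert q S _ ih =>
    obtain ⟨t, hst, ht, hS0⟩ := ih fun p hp => hS p (Finset.mem_insert_of_mem hp)
    obtain ⟨t', htt', ht', hq0, hrest⟩ :=
      exists_reach_pair_eq_zero hadj ht (hS q (Finset.mem_insert_self q S))
    refine ⟨t', hst.trans htt', ht',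
      (Finset.forall_mem_insert _ _ _).2 ⟨hq0, fun p hp => ?_⟩⟩
    by_cases hpq : s(p.1, p.2) = s(q.1, q.2)
    · rcases Sym2.eq_iff.1 hpq with ⟨h1, h2⟩ | ⟨h1, h2⟩
      · rw [h1, h2, hq0]
      · rw [h1, h2, ht'.2, hq0]
    · rw [hrest _ _ hpq, hS0 p hp]

theorem evenable_of_forall_adjacent [Fintype E] {s : (ZMod n → E) × (E → E → ZMod 2)}
    (hs : IsState s) : Evenable n s := by
  obtain ⟨t, hst, -, ht⟩ := exists_reach_forall_mem_eq_zero hadj hs Finset.univ.offDiag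
    fun p hp => (Finset.mem_offDiag.1 hp).2.2
  exact ⟨t, hst, fun x y hxy =>
    ht (x, y) (Finset.mem_offDiag.2 ⟨Finset.mem_univ _, Finset.mem_univ _, hxy⟩)⟩

end Flip

lemma ZMod.adjacent_of_ne_of_le_three {n : ℕ} (hn1 : 1 ≤ n) (hn3 : n ≤ 3) :
    ∀ i j : ZMod n, i ≠ j → j = i + 1 ∨ i = j + 1 := by
  interval_cases n <;> decide

theorem statement_9_general {n : ℕ} (hn1 : 1 ≤ n) (hn3 : n ≤ 3) {E : Type*} [DecidableEq E]
    [Fintype E]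
    (r : ZMod n → E) (hr : Function.Bijective r)
    (c : E → E → ZMod 2) (hsymm : ∀ x y : E, c x y = c y x) :
    Evenable n (r, c) :=
  evenable_of_forall_adjacent (ZMod.adjacent_of_ne_of_le_three hn1 hn3) ⟨hr, hsymm⟩

/-- Every state on a finite set with at most 3 elements is evenable. -/
theorem statement_9 {n : ℕ} (hn1 : 1 ≤ n) (hn3 : n ≤ 3) {E : Type*} [DecidableEq E]
    [Fintype E] (hcard : Fintype.card E = n)
    (r : ZMod n → E) (hr : Function.Bijective r)
    (c : E → E → ZMod 2) (hsymm : ∀ x y : E, c x y = c y x) (hdiag : ∀ x : E, c x x = 0) :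
    Evenable n (r, c) :=
  statement_9_general hn1 hn3 r hr c hsymm
end
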